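/- The ideal L of O = ℤ[ξ, λ] generated as an O-module by the two elements g₁ = −1 − ξ + λ − 2λξ and g₃ = −2 + ξ + 2λ + 2λξ equals the ℤ-span of g₁, ξg₁, g₃, and g₄ = −2 − 2ξ − λ + 2λξ. -/
import Mathlib


noncomputable def xi : ℂ := (1 + Complex.I * (Real.sqrt 3 : ℂ)) / 2
noncomputable def lam : ℂ := 4 + (Real.sqrt 15 : ℂ)
noncomputable def OA : Subalgebra ℤ ℂ := Algebra.adjoin ℤ ({xi, lam} : Set ℂ)
noncomputable def g1 : ℂ := -1 - xi + lam - 2 * (lam * xi)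
noncomputable def g3 : ℂ := -2 + xi + 2 * lam + 2 * (lam * xi)
noncomputable def g4 : ℂ := -2 - 2 * xi - lam + 2 * (lam * xi)

lemma sqrt3_sq : ((Real.sqrt 3 : ℂ))^2 = 3 := by
  rw [← Complex.ofReal_pow, Real.sq_sqrt (by norm_num : (3:ℝ) ≥ 0)]; norm_num

lemma sqrt15_sq : ((Real.sqrt 15 : ℂ))^2 = 15 := by
  rw [← Complex.ofReal_pow, Real.sq_sqrt (by norm_num : (15:ℝ) ≥ 0)]; norm_num

lemma hxi2 : xi ^ 2 = xi - 1 := by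
  unfold xi
  linear_combination (Complex.I ^ 2 / 4) * sqrt3_sq + (3 / 4) * Complex.I_sq

lemma hlam2 : lam ^ 2 = 8 * lam - 1 := by
  unfold lam
  linear_combination sqrt15_sq

lemma xi_mem : xi ∈ OA := Algebra.subset_adjoin (by simp)
lemma lam_mem : lam ∈ OA := Algebra.subset_adjoin (by simp)

section
open Submodule

noncomputable def M : Submodule ℤ ℂ := Submodule.span ℤ ({g1, xi * g1, g3, g4} : Set ℂ)

lemma g1_mem : g1 ∈ M := subset_span (by simp)
lemma g2_mem : xi * g1 ∈ M := subset_span (by simp)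
lemma g3_mem : g3 ∈ M := subset_span (by simp)
lemma g4_mem : g4 ∈ M := subset_span (by simp)

lemma mem_of_comb (c1 c2 c3 c4 : ℤ) : (c1 : ℂ) * g1 + c2 * (xi * g1) + c3 * g3 + c4 * g4 ∈ M := by
  have := M.add_mem (M.add_mem (M.add_mem (M.smul_mem c1 g1_mem) (M.smul_mem c2 g2_mem))
    (M.smul_mem c3 g3_mem)) (M.smul_mem c4 g4_mem)
  simpa [zsmul_eq_mul] using this

lemma xi_mul_M : ∀ x ∈ M, xi * x ∈ M := by
  intro x hx
  refine Submodule.span_induction ?_ ?_ ?_ ?_ hx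
  · rintro y hy
    simp only [Set.mem_insert_iff, Set.mem_singleton_iff] at hy
    rcases hy with rfl | rfl | rfl | rfl
    · exact g2_mem
    · -- xi * (xi * g1) = -g1 + xi*g1
      have h : xi * (xi * g1) = (-1 : ℤ) * g1 + (1:ℤ) * (xi * g1) + (0:ℤ) * g3 + (0:ℤ) * g4 := by
        unfold g1 g3 g4
        push_cast
        linear_combination (-1 + lam - xi - 2 * xi * lam) * hxi2
      rw [h]; exact mem_of_comb _ _ _ _
    · have h : xi * g3 = (-1 : ℤ) * g1 + (0:ℤ) * (xi * g1) + (0:ℤ) * g3 + (1:ℤ) * g4 := by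
        unfold g1 g3 g4
        push_cast
        linear_combination (1 + 2 * lam) * hxi2
      rw [h]; exact mem_of_comb _ _ _ _
    · have h : xi * g4 = (-1 : ℤ) * g1 + (1:ℤ) * (xi * g1) + (-1:ℤ) * g3 + (1:ℤ) * g4 := by
        unfold g1 g3 g4
        push_cast
        linear_combination (-1 + 4 * lam) * hxi2
      rw [h]; exact mem_of_comb _ _ _ _
  · simp
  · intro a b _ _ ha hb
    rw [mul_add]; exact M.add_mem ha hb
  · intro n a _ ha
    rw [mul_smul_comm]; exact M.smul_mem n ha

lemma lam_mul_M : ∀ x ∈ M, lam * x ∈ M := by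
  intro x hx
  refine Submodule.span_induction ?_ ?_ ?_ ?_ hx
  · rintro y hy
    simp only [Set.mem_insert_iff, Set.mem_singleton_iff] at hy
    rcases hy with rfl | rfl | rfl | rfl
    · have h : lam * g1 = (6 : ℤ) * g1 + (-1:ℤ) * (xi * g1) + (0:ℤ) * g3 + (-3:ℤ) * g4 := by
        unfold g1 g3 g4
        push_cast
        linear_combination (-1 - 2 * lam) * hxi2 + (1 - 2 * xi) * hlam2
      rw [h]; exact mem_of_comb _ _ _ _
    · have h : lam * (xi * g1) = (4 : ℤ) * g1 + (2:ℤ) * (xi * g1) + (3:ℤ) * g3 + (-3:ℤ) * g4 := by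
        unfold g1 g3 g4
        push_cast
        linear_combination (2 + 3 * lam - 2 * lam * lam) * hxi2 + (2 - xi) * hlam2
      rw [h]; exact mem_of_comb _ _ _ _
    · have h : lam * g3 = (-5 : ℤ) * g1 + (5:ℤ) * (xi * g1) + (5:ℤ) * g3 + (1:ℤ) * g4 := by
        unfold g1 g3 g4
        push_cast
        linear_combination (5 + 10 * lam) * hxi2 + (2 + 2 * xi) * hlam2
      rw [h]; exact mem_of_comb _ _ _ _
    · have h : lam * g4 = (-5 : ℤ) * g1 + (0:ℤ) * (xi * g1) + (-1:ℤ) * g3 + (3:ℤ) * g4 := by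
        unfold g1 g3 g4
        push_cast
        linear_combination (-1 + 2 * xi) * hlam2
      rw [h]; exact mem_of_comb _ _ _ _
  · simp
  · intro a b _ _ ha hb
    rw [mul_add]; exact M.add_mem ha hb
  · intro n a _ ha
    rw [mul_smul_comm]; exact M.smul_mem n ha

lemma OA_mul_M : ∀ a ∈ OA, ∀ x ∈ M, a * x ∈ M := by
  intro a ha
  refine Algebra.adjoin_induction ?_ ?_ ?_ ?_ ha
  · rintro y hy
    simp only [Set.mem_insert_iff, Set.mem_singleton_iff] at hy
    rcases hy with rfl | rfl
    · exact xi_mul_M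
    · exact lam_mul_M
  · intro n x hx
    have : (algebraMap ℤ ℂ n) * x = n • x := by
      simp [zsmul_eq_mul]
    rw [this]; exact M.smul_mem n hx
  · intro a b _ _ ha hb x hx
    rw [add_mul]; exact M.add_mem (ha x hx) (hb x hx)
  · intro a b _ _ ha hb x hx
    rw [mul_assoc]; exact ha _ (hb x hx)

end

/-- The O-ideal generated by g₁ and g₃ equals the ℤ-span of g₁, ξg₁, g₃, g₄. -/
theorem ideal_eq_zspan :
    ((Submodule.span OA ({g1, g3} : Set ℂ) : Submodule OA ℂ) : Set ℂ) =
      ((Submodule.span ℤ ({g1, xi * g1, g3, g4} : Set ℂ) : Submodule ℤ ℂ) : Set ℂ) := by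
  apply Set.eq_of_subset_of_subset
  · -- OA-span ⊆ M
    intro x hx
    simp only [SetLike.mem_coe] at hx ⊢
    refine Submodule.span_induction ?_ ?_ ?_ ?_ hx
    · rintro y hy
      simp only [Set.mem_insert_iff, Set.mem_singleton_iff] at hy
      rcases hy with rfl | rfl
      · exact g1_mem
      · exact g3_mem
    · simp [M]
    · intro a b _ _ ha hb; exact (M).add_mem ha hb
    · intro a y _ hy
      have : a • y = (a : ℂ) * y := rfl
      rw [this]
      exact OA_mul_M (a : ℂ) a.2 y hy
  · -- M ⊆ OA-span
    intro x hx
    simp only [SetLike.mem_coe] at hx ⊢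
    set N : Submodule OA ℂ := Submodule.span OA ({g1, g3} : Set ℂ) with hN
    have hg1 : g1 ∈ N := Submodule.subset_span (by simp)
    have hg3 : g3 ∈ N := Submodule.subset_span (by simp)
    have hxig1 : xi * g1 ∈ N := by
      have : xi * g1 = (⟨xi, xi_mem⟩ : OA) • g1 := rfl
      rw [this]; exact N.smul_mem _ hg1
    have hg4 : g4 ∈ N := by
      have key : g4 = (⟨-1 + 2 * xi - lam + lam * xi,
          by
            refine add_mem (sub_mem (add_mem (neg_mem (one_mem OA))
              (mul_mem (by exact_mod_cast (OA.intCast_mem 2 : ((2:ℤ):ℂ) ∈ OA)) xi_mem)) lam_mem)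
              (mul_mem lam_mem xi_mem)⟩ : OA) • g1 +
          (⟨2 + 2 * xi - lam,
          by
            refine sub_mem (add_mem (by exact_mod_cast (OA.intCast_mem 2 : ((2:ℤ):ℂ) ∈ OA))
              (mul_mem (by exact_mod_cast (OA.intCast_mem 2 : ((2:ℤ):ℂ) ∈ OA)) xi_mem)) lam_mem⟩ : OA) • g3 := by
        show g4 = (-1 + 2 * xi - lam + lam * xi) * g1 + (2 + 2 * xi - lam) * g3
        unfold g1 g3 g4
        linear_combination (lam + 2 * lam * lam) * hxi2 + (1 + xi) * hlam2
      rw [key]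
      exact N.add_mem (N.smul_mem _ hg1) (N.smul_mem _ hg3)
    refine Submodule.span_induction ?_ ?_ ?_ ?_ hx
    · rintro y hy
      simp only [Set.mem_insert_iff, Set.mem_singleton_iff] at hy
      rcases hy with rfl | rfl | rfl | rfl
      · exact hg1
      · exact hxig1
      · exact hg3
      · exact hg4
    · exact N.zero_mem
    · intro a b _ _ ha hb; exact N.add_mem ha hb
    · intro n a _ ha
      exact N.toAddSubgroup.zsmul_mem ha n
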